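/- An inverse semigroup G is E-continuous if and only if its associated groupoid (G * X)/≡ is Hausdorff. -/

import Mathlib

/-- An inverse semigroup: a semigroup in which every element `g` has a unique
generalized inverse `star g`. -/
class InverseSemigroup (G : Type*) extends Semigroup G where
  star : G → G
  mul_star_mul : ∀ g : G, g * star g * g = g
  star_mul_star : ∀ g : G, star g * g * star g = star g
  star_unique : ∀ g h : G, g * h * g = g → h * g * h = h → h = star g

open InverseSemigroup

variable (G : Type*) [InverseSemigroup G]

/-- Idempotents of the inverse semigroup. -/
def IsIdem (e : G) : Prop := e * e = e

/-- The character space `X` of `C*(E)`: nonzero `{0,1}`-valued multiplicative functions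
on the semilattice `E` of idempotents, with the topology of pointwise convergence
(the Gelfand topology). A character `x` satisfies `x ∈ e` iff `x e = true`. -/
def SgChar : Type _ :=
  {x : G → Bool // (∀ e f : G, IsIdem G e → IsIdem G f → x (e * f) = (x e && x f)) ∧
    ∃ e : G, IsIdem G e ∧ x e = true}

instance : TopologicalSpace (SgChar G) :=
  TopologicalSpace.induced Subtype.val (by infer_instance : TopologicalSpace (G → Bool))

/-- The space `G * X = {(g, x) : x ∈ supp (1_{g* g})}`, topologized as a subspace of
`G × X` with `G` discrete. -/
def GX : Type _ := {p : G × SgChar G // p.2.1 (star p.1 * p.1) = true}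

instance : TopologicalSpace (GX G) :=
  TopologicalSpace.induced Subtype.val
    (@instTopologicalSpaceProd G (SgChar G) ⊥ inferInstance)

/-- The equivalence `(g, x) ≡ (h, y)` iff `x = y` and `g e = h e` for some idempotent
`e` with `x ∈ e`. -/
def gxRel (p q : GX G) : Prop :=
  p.1.2 = q.1.2 ∧ ∃ e : G, IsIdem G e ∧ p.1.2.1 e = true ∧ p.1.1 * e = q.1.1 * e

/-- The groupoid associated to the inverse semigroup `G`: the quotient `(G * X)/≡`
with the quotient topology. -/
abbrev Gpd : Type _ := Quot (gxRel G)

/-- `E`-continuity of `G`: for every `g`, the pointwise supremum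
`⋁ {1_e : e ∈ E, e ≤ g}` (the indicator of `{x : x e = true for some idempotent e ≤ g}`)
is a continuous function on `X`. -/
def EContinuous : Prop :=
  ∀ g : G, Continuous
    ({x : SgChar G | ∃ e : G, IsIdem G e ∧ e = g * e ∧ x.1 e = true}.indicator
      (fun _ => (1 : ℝ)))

/-
For a character `x` in the domain of `g`, the germs `[g, x]` and `[h, x]` coincide exactly when
`x` lies in `lowerSupp (g* h)`, the union of the supports of the idempotents below `g* h`. These
sets are always open, so `E`-continuity says precisely that they are all closed. The quotient map
`G * X → (G * X)/≡` is open, hence the groupoid is Hausdorff iff the graph of `≡` is closed in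
`(G * X)²`. As `G` is discrete, closedness of the graph reduces to closedness of every
`lowerSupp k`; conversely `lowerSupp k` is read off the graph by comparing the germs of `k k*`
and of `k` at the same point.
-/

variable {G}

namespace InverseSemigroup

theorem star_star (g : G) : star (star g) = g :=
  (star_unique (star g) g (star_mul_star g) (mul_star_mul g)).symm

theorem _root_.IsIdem.mul_self_mul {e : G} (he : IsIdem G e) (a : G) : e * (e * a) = e * a := by
  rw [← mul_assoc, he]

theorem _root_.IsIdem.star_eq {e : G} (he : IsIdem G e) : star e = e := by
  have h : e * e * e = e := by rw [he, he]
  exact (star_unique e e h h).symm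

theorem isIdem_star_mul_self (g : G) : IsIdem G (star g * g) := by
  show star g * g * (star g * g) = star g * g
  rw [← mul_assoc, star_mul_star]

theorem isIdem_mul_star_self (g : G) : IsIdem G (g * star g) := by
  show g * star g * (g * star g) = g * star g
  rw [← mul_assoc, mul_star_mul]

theorem _root_.IsIdem.mul {e f : G} (he : IsIdem G e) (hf : IsIdem G f) : IsIdem G (e * f) := by
  set b := star (e * f) with hb
  have hb_inv : ∀ a, b * (e * (f * (b * a))) = b * a := fun a => by
    simpa only [mul_assoc] using congrArg (· * a) (star_mul_star (e * f))
  -- `f * b * e` is another generalized inverse of `e * f`, hence equals `b`, and it is idempotent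
  have hfbe : f * b * e = b := star_unique _ _
    (by simpa only [mul_assoc, he.mul_self_mul, hf.mul_self_mul] using mul_star_mul (e * f))
    (by simp only [mul_assoc, he.mul_self_mul, hf.mul_self_mul, hb_inv])
  have hb_idem : IsIdem G b := calc
    b * b = f * b * e * (f * b * e) := by rw [hfbe]
    _ = f * b * e := by simp only [mul_assoc, hb_inv]
    _ = b := hfbe
  have hef : e * f = b := by rw [← hb_idem.star_eq, hb, star_star]
  rw [hef]
  exact hb_idem

theorem _root_.IsIdem.comm {e f : G} (he : IsIdem G e) (hf : IsIdem G f) : e * f = f * e := by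
  have hef := he.mul hf
  have hfe := hf.mul he
  have h : f * e = star (e * f) := star_unique _ _
    (by simpa only [mul_assoc, he.mul_self_mul, hf.mul_self_mul] using
      (show e * f * (e * f) = e * f from hef))
    (by simpa only [mul_assoc, he.mul_self_mul, hf.mul_self_mul] using
      (show f * e * (f * e) = f * e from hfe))
  rw [h, hef.star_eq]

theorem star_mul (g h : G) : star (g * h) = star h * star g := by
  have c := (isIdem_mul_star_self h).comm (isIdem_star_mul_self g)
  refine (star_unique _ _ ?_ ?_).symm
  · calc g * h * (star h * star g) * (g * h) = g * (h * star h * (star g * g)) * h := by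
          simp only [mul_assoc]
      _ = (g * star g * g) * (h * star h * h) := by rw [c]; simp only [mul_assoc]
      _ = g * h := by rw [mul_star_mul, mul_star_mul]
  · calc star h * star g * (g * h) * (star h * star g)
          = star h * (star g * g * (h * star h)) * star g := by simp only [mul_assoc]
      _ = (star h * h * star h) * (star g * g * star g) := by rw [← c]; simp only [mul_assoc]
      _ = star h * star g := by rw [star_mul_star, star_mul_star]

theorem _root_.IsIdem.mul_mul_star {f : G} (hf : IsIdem G f) (h : G) :
    IsIdem G (h * f * star h) := by
  have c := hf.comm (isIdem_star_mul_self h)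
  calc h * f * star h * (h * f * star h) = h * (f * (star h * h)) * f * star h := by
        simp only [mul_assoc]
    _ = h * star h * h * (f * f) * star h := by rw [c]; simp only [mul_assoc]
    _ = h * f * star h := by rw [mul_star_mul, hf]

theorem star_mul_self_mul_of_eq_mul {e g : G} (he : IsIdem G e) (hle : e = g * e) :
    star g * g * e = e := by
  have c := he.comm (isIdem_star_mul_self g)
  have hstar : e * star g = e := by
    conv_rhs => rw [← he.star_eq, hle, star_mul, he.star_eq]
  calc star g * g * e = e * (e * (star g * g)) := by rw [he.mul_self_mul, c]
    _ = e * star g * (g * e) := by rw [c]; simp only [mul_assoc]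
    _ = e := by rw [← hle, hstar, he]

theorem mul_eq_mul_of_star_mul_mul_eq {f g h : G} (hf : IsIdem G f) (hle : star g * h * f = f) :
    g * f = h * f := by
  have hf_star : f * (star h * g) = f := by
    simpa only [star_mul, star_star, hf.star_eq] using congrArg star hle
  set w := h * f * star h
  have hw : h * f = w * g := by
    conv_lhs => rw [← hf_star]
    simp only [w, mul_assoc]
  calc g * f = g * star g * (h * f) := by
        conv_lhs => rw [← hle]
        simp only [mul_assoc]
    _ = w * (g * star g) * g := by
        rw [hw, ← mul_assoc, (isIdem_mul_star_self g).comm (hf.mul_mul_star h)]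
    _ = h * f := by rw [mul_assoc, mul_star_mul, hw]

theorem star_mul_mul_eq_of_mul_eq_mul {e g h : G} (he : IsIdem G e) (hge : g * e = h * e) :
    star g * h * (e * (star g * g)) = e * (star g * g) := by
  calc star g * h * (e * (star g * g)) = star g * g * e * (star g * g) := by
        rw [mul_assoc (star g) h, ← mul_assoc h, ← hge]; simp only [mul_assoc]
    _ = e * (star g * g) := by
        rw [(isIdem_star_mul_self g).comm he, mul_assoc, isIdem_star_mul_self g]

end InverseSemigroup

theorem continuous_indicator_const_iff_isClopen {X β : Type*} [TopologicalSpace X]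
    [TopologicalSpace β] [T1Space β] [Zero β] {s : Set X} {c : β} (hc : c ≠ 0) :
    Continuous (s.indicator fun _ => c) ↔ IsClopen s := by
  refine ⟨fun h => ⟨?_, ?_⟩, fun h => h.continuous_indicator continuous_const⟩
  · convert (isClosed_singleton (x := c)).preimage h
    ext x
    by_cases hx : x ∈ s <;> simp [hx, hc.symm]
  · convert (isOpen_compl_singleton (x := (0 : β))).preimage h
    ext x
    by_cases hx : x ∈ s <;> simp [hx, hc]

section Characters

def idemSupp (e : G) : Set (SgChar G) := {x | x.1 e = true}

def lowerSupp (g : G) : Set (SgChar G) :=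
  {x | ∃ e : G, IsIdem G e ∧ e = g * e ∧ x.1 e = true}

instance : T2Space (SgChar G) :=
  Topology.IsEmbedding.subtypeVal.t2Space

theorem isClopen_idemSupp (e : G) : IsClopen (idemSupp e) :=
  (isClopen_discrete {true}).preimage ((continuous_apply e).comp continuous_induced_dom)

theorem isOpen_lowerSupp (g : G) : IsOpen (lowerSupp g) := by
  have : lowerSupp g = ⋃ (e : G) (_ : IsIdem G e ∧ e = g * e), idemSupp e := by
    ext x; simp [lowerSupp, idemSupp, and_assoc]
  rw [this]
  exact isOpen_biUnion fun e _ => (isClopen_idemSupp e).isOpen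

theorem idemSupp_subset_of_mul_eq {e f : G} (he : IsIdem G e) (hf : IsIdem G f) (hfe : f * e = e) :
    idemSupp e ⊆ idemSupp f := fun x hx => by
  have := x.2.1 f e hf he
  rw [hfe, hx] at this
  simpa [idemSupp] using this.symm

theorem lowerSupp_subset_idemSupp (g : G) :
    lowerSupp g ⊆ idemSupp (g * star g) ∩ idemSupp (star g * g) := by
  rintro x ⟨e, he, hle, hx⟩
  refine ⟨idemSupp_subset_of_mul_eq he (isIdem_mul_star_self g) ?_ hx,
    idemSupp_subset_of_mul_eq he (isIdem_star_mul_self g) (star_mul_self_mul_of_eq_mul he hle) hx⟩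
  conv_lhs => rw [hle]
  rw [← mul_assoc, mul_star_mul, ← hle]

theorem eContinuous_iff : EContinuous G ↔ ∀ g : G, IsClosed (lowerSupp g) :=
  forall_congr' fun g => (continuous_indicator_const_iff_isClopen one_ne_zero).trans
    ⟨IsClopen.isClosed, fun h => ⟨h, isOpen_lowerSupp g⟩⟩

theorem exists_germ_iff {g h : G} {x : SgChar G} (hx : x ∈ idemSupp (star g * g)) :
    (∃ e, IsIdem G e ∧ x.1 e = true ∧ g * e = h * e) ↔ x ∈ lowerSupp (star g * h) := by
  constructor
  · rintro ⟨e, he, hxe, hge⟩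
    refine ⟨e * (star g * g), he.mul (isIdem_star_mul_self g),
      (star_mul_mul_eq_of_mul_eq_mul he hge).symm, ?_⟩
    rw [x.2.1 _ _ he (isIdem_star_mul_self g), hxe, hx]
    rfl
  · rintro ⟨f, hf, hle, hxf⟩
    exact ⟨f, hf, hxf, mul_eq_mul_of_star_mul_mul_eq hf hle.symm⟩

end Characters

section Groupoid

theorem gxRel_iff {p q : GX G} :
    gxRel G p q ↔ p.1.2 = q.1.2 ∧ p.1.2 ∈ lowerSupp (star p.1.1 * q.1.1) :=
  and_congr_right fun _ => exists_germ_iff p.2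

theorem equivalence_gxRel : Equivalence (gxRel G) where
  refl p := ⟨rfl, star p.1.1 * p.1.1, isIdem_star_mul_self _, p.2, rfl⟩
  symm := by
    rintro p q ⟨hx, e, he, hxe, hge⟩
    exact ⟨hx.symm, e, he, hx ▸ hxe, hge.symm⟩
  trans := by
    rintro p q r ⟨hx, e, he, hxe, hge⟩ ⟨hx', f, hf, hxf, hhf⟩
    refine ⟨hx.trans hx', e * f, he.mul hf, ?_, ?_⟩
    · rw [p.1.2.2.1 _ _ he hf, hxe, hx, hxf]
      rfl
    · rw [← mul_assoc, hge, mul_assoc, he.comm hf, ← mul_assoc, hhf, mul_assoc, hf.comm he]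

def GX.basicSet (g : G) (N : Set (SgChar G)) : Set (GX G) := {p | p.1.1 = g ∧ p.1.2 ∈ N}

theorem GX.isOpen_basicSet (g : G) {N : Set (SgChar G)} (hN : IsOpen N) :
    IsOpen (GX.basicSet g N) := by
  let _ : TopologicalSpace G := ⊥
  have : DiscreteTopology G := ⟨rfl⟩
  exact ((isOpen_discrete {g}).prod hN).preimage continuous_induced_dom

theorem GX.exists_basicSet_subset {O : Set (GX G)} (hO : IsOpen O) {p : GX G} (hp : p ∈ O) :
    ∃ N : Set (SgChar G), IsOpen N ∧ p.1.2 ∈ N ∧ GX.basicSet p.1.1 N ⊆ O := by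
  let _ : TopologicalSpace G := ⊥
  obtain ⟨O', hO', rfl⟩ := isOpen_induced_iff.mp hO
  obtain ⟨u, N, -, hN, hgu, hxN, huN⟩ := isOpen_prod_iff.mp hO' p.1.1 p.1.2 hp
  exact ⟨N, hN, hxN, fun q ⟨hq, hqN⟩ => huN ⟨hq ▸ hgu, hqN⟩⟩

theorem GX.continuous_snd : Continuous fun p : GX G => p.1.2 := by
  let _ : TopologicalSpace G := ⊥
  exact _root_.continuous_snd.comp continuous_induced_dom

theorem isOpenMap_gpd_mk : IsOpenMap (Quot.mk (gxRel G)) := by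
  intro O hO
  refine isQuotientMap_quot_mk.isOpen_preimage.mp (isOpen_iff_forall_mem_open.mpr ?_)
  rintro q ⟨p, hpO, hpq⟩
  obtain ⟨hx, e, he, hxe, hge⟩ := (equivalence_gxRel.quot_mk_eq_iff _ _).mp hpq
  obtain ⟨N, hN, hxN, hNO⟩ := GX.exists_basicSet_subset hO hpO
  -- a germ `[p.1.1, y]` equivalent to `[q.1.1, y]` exists for all `y` near `q.1.2`
  refine ⟨GX.basicSet q.1.1 (N ∩ idemSupp (star p.1.1 * p.1.1) ∩ idemSupp e), ?_,
    GX.isOpen_basicSet _ ((hN.inter (isClopen_idemSupp _).isOpen).inter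
      (isClopen_idemSupp e).isOpen), rfl, hx ▸ ⟨⟨hxN, p.2⟩, hxe⟩⟩
  rintro q' ⟨hq', ⟨hyN, hyD⟩, hye⟩
  refine ⟨⟨(p.1.1, q'.1.2), hyD⟩, hNO ⟨rfl, hyN⟩, Quot.sound ⟨rfl, e, he, hye, ?_⟩⟩
  rw [hge, hq']

theorem t2Space_gpd_iff :
    T2Space (Gpd G) ↔ IsClosed {pq : GX G × GX G | gxRel G pq.1 pq.2} := by
  rw [t2Space_iff_of_isOpenQuotientMap ⟨Quot.mk_surjective, continuous_quot_mk, isOpenMap_gpd_mk⟩]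
  simp only [equivalence_gxRel.quot_mk_eq_iff]

theorem isClosed_setOf_gxRel (h : ∀ g : G, IsClosed (lowerSupp g)) :
    IsClosed {pq : GX G × GX G | gxRel G pq.1 pq.2} := by
  have hdiag : IsClosed {pq : GX G × GX G | pq.1.1.2 = pq.2.1.2} :=
    isClosed_eq (GX.continuous_snd.comp continuous_fst) (GX.continuous_snd.comp continuous_snd)
  have hsupp : IsClosed {pq : GX G × GX G | pq.1.1.2 ∈ lowerSupp (star pq.1.1.1 * pq.2.1.1)} := by
    rw [← isOpen_compl_iff]
    convert isOpen_iUnion fun g : G => isOpen_iUnion fun k : G =>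
      (GX.isOpen_basicSet g (h (star g * k)).isOpen_compl).prod (GX.isOpen_basicSet k isOpen_univ)
    ext pq
    simp [GX.basicSet]
  convert hdiag.inter hsupp using 1
  ext pq
  exact gxRel_iff

theorem isClosed_lowerSupp_of_isClosed_setOf_gxRel
    (hR : IsClosed {pq : GX G × GX G | gxRel G pq.1 pq.2}) (g : G) : IsClosed (lowerSupp g) := by
  let _ : TopologicalSpace G := ⊥
  -- the germs `[g g*, x]` and `[g, x]` coincide exactly when `x ∈ lowerSupp g`
  have hgg : star (g * star g) * (g * star g) = g * star g := by
    rw [(isIdem_mul_star_self g).star_eq]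
    exact isIdem_mul_star_self g
  set D := idemSupp (g * star g) ∩ idemSupp (star g * g)
  have hD : IsClosed D := (isClopen_idemSupp _).isClosed.inter (isClopen_idemSupp _).isClosed
  let φ : D → GX G × GX G := fun x =>
    (⟨(g * star g, x), by dsimp only; rw [hgg]; exact x.2.1⟩, ⟨(g, x), x.2.2⟩)
  have hφ : Continuous φ := by
    apply Continuous.prodMk <;>
      exact continuous_induced_rng.2 (continuous_const.prodMk continuous_subtype_val)
  have h := (hD.inter_preimage_val_iff (t := lowerSupp g)).mp <| by
    convert hR.preimage hφ using 1
    ext x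
    simp [φ, gxRel_iff, (isIdem_mul_star_self g).star_eq, mul_star_mul]
  rwa [Set.inter_eq_right.mpr (lowerSupp_subset_idemSupp g)] at h

end Groupoid

/-- An inverse semigroup is `E`-continuous if and only if its associated groupoid
`(G * X)/≡` is Hausdorff. -/
theorem stmt17 {G : Type*} [InverseSemigroup G] :
    EContinuous G ↔ T2Space (Gpd G) := by
  rw [eContinuous_iff, t2Space_gpd_iff]
  exact ⟨isClosed_setOf_gxRel, fun hR => isClosed_lowerSupp_of_isClosed_setOf_gxRel hR⟩
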